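/- arXiv:1902.00230 — 6 statements merged into one kernel-verified Lean document; each statement's English description precedes it below -/
import Mathlib

section
/- For every n ≥ 1, the number of distinct permutations of {1,…,n} obtainable from the identity permutation by a single TDRL operation equals 2^n − n. -/
/-- The TDRL operation with binary pattern `b` applied to a sequence `l`:
concatenate the entries at positions where `b` is `true` (in order)
with the entries at positions where `b` is `false` (in order). -/
def tdrl (b : List Bool) (l : List ℕ) : List ℕ :=
  ((l.zip b).filter (fun p => p.2)).map Prod.fst ++
  ((l.zip b).filter (fun p => !p.2)).map Prod.fst

/-- The mirror-TDRL operation: kept entries of the original copy followed by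
kept entries of the reversed copy. -/
def mtdrl (b : List Bool) (l : List ℕ) : List ℕ :=
  ((l.zip b).filter (fun p => p.2)).map Prod.fst ++
  (((l.zip b).filter (fun p => !p.2)).map Prod.fst).reverse

/-- The identity permutation `(1, 2, …, n)` as a list. -/
def ident (n : ℕ) : List ℕ := List.range' 1 n

/-- `l` is a permutation of `{1, …, n}`. -/
def IsPermOf (n : ℕ) (l : List ℕ) : Prop := l.Perm (ident n)

/-- Permutations obtainable from `π` by one TDRL operation. -/
def SOut (π : List ℕ) : Set (List ℕ) :=
  {ρ | ∃ b : List Bool, b.length = π.length ∧ tdrl b π = ρ}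

/-- Permutations `ρ` from which `π` is obtainable by one TDRL operation. -/
def SIn (π : List ℕ) : Set (List ℕ) :=
  {ρ | ρ.Perm π ∧ ∃ b : List Bool, b.length = ρ.length ∧ tdrl b ρ = π}

/-- Permutations obtainable from `π` by one MTDRL operation. -/
def SMOut (π : List ℕ) : Set (List ℕ) :=
  {ρ | ∃ b : List Bool, b.length = π.length ∧ mtdrl b π = ρ}

/-- Permutations `ρ` from which `π` is obtainable by one MTDRL operation. -/
def SMIn (π : List ℕ) : Set (List ℕ) :=
  {ρ | ρ.Perm π ∧ ∃ b : List Bool, b.length = ρ.length ∧ mtdrl b ρ = π}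

/-- Permutations obtainable from `π` by one bounded TDRL operation of width `k`. -/
def SOutK (k : ℕ) (π : List ℕ) : Set (List ℕ) :=
  {ρ | ∃ i, ∃ b : List Bool, i + k ≤ π.length ∧ b.length = k ∧
    ρ = π.take i ++ tdrl b ((π.drop i).take k) ++ π.drop (i + k)}

/-- Permutations `ρ` from which `π` is obtainable by one bounded TDRL of width `k`. -/
def SInK (k : ℕ) (π : List ℕ) : Set (List ℕ) :=
  {ρ | ρ.Perm π ∧ ∃ i, ∃ b : List Bool, i + k ≤ ρ.length ∧ b.length = k ∧
    π = ρ.take i ++ tdrl b ((ρ.drop i).take k) ++ ρ.drop (i + k)}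

/-- Permutations obtainable from `π` by one bounded MTDRL operation of width `k`. -/
def SMOutK (k : ℕ) (π : List ℕ) : Set (List ℕ) :=
  {ρ | ∃ i, ∃ b : List Bool, i + k ≤ π.length ∧ b.length = k ∧
    ρ = π.take i ++ mtdrl b ((π.drop i).take k) ++ π.drop (i + k)}

/-- Permutations `ρ` from which `π` is obtainable by one bounded MTDRL of width `k`. -/
def SMInK (k : ℕ) (π : List ℕ) : Set (List ℕ) :=
  {ρ | ρ.Perm π ∧ ∃ i, ∃ b : List Bool, i + k ≤ ρ.length ∧ b.length = k ∧
    π = ρ.take i ++ mtdrl b ((ρ.drop i).take k) ++ ρ.drop (i + k)}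

/-! For an increasing sequence `l`, the pattern `b` cuts `tdrl b l` into two increasing runs: the
entries marked `true`, then those marked `false`. If two patterns produce the same sequence with
runs of different lengths, that sequence is increasing throughout, hence equal to `l`. Otherwise
the first runs coincide, and since `l` has no repeated entries the first run determines the
pattern. So distinct patterns give distinct outputs, except the `n + 1` patterns `1…10…0`, which
all give back `l`; the `2 ^ n` patterns thus produce `2 ^ n - (n + 1) + 1` permutations. -/

open List

variable {α : Type*}

theorem List.pairwise_append_of_append_eq_append {R : α → α → Prop} [IsTrans α R]
    {A B A' B' : List α} (h : A ++ B = A' ++ B') (hlt : A'.length < A.length)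
    (hA : A.Pairwise R) (hB' : B'.Pairwise R) : (A ++ B).Pairwise R := by
  obtain ⟨C, rfl, rfl⟩ : ∃ C, A = A' ++ C ∧ B' = C ++ B := by
    rcases append_eq_append_iff.1 h with ⟨C, rfl, -⟩ | h
    · simp at hlt
    · exact h
  obtain ⟨c, hc⟩ := exists_mem_of_ne_nil C (by rintro rfl; simp at hlt)
  rw [pairwise_append] at hA hB'
  rw [append_assoc, pairwise_append, pairwise_append]
  refine ⟨hA.1, ⟨hA.2.1, hB'.2.1, hB'.2.2⟩, fun a ha x hx => ?_⟩
  rcases mem_append.1 hx with hx | hx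
  · exact hA.2.2 a ha x hx
  · exact _root_.trans (hA.2.2 a ha c hc) (hB'.2.2 c hc x hx)

theorem Set.ncard_image_add_ncard_fiber {β : Type*} {f : α → β} {s : Set α} {y : β}
    (hs : s.Finite) (hy : y ∈ f '' s) (hinj : (s \ f ⁻¹' {y}).InjOn f) :
    (f '' s).ncard + (s ∩ f ⁻¹' {y}).ncard = s.ncard + 1 := by
  have himage : f '' s = insert y (f '' (s \ f ⁻¹' {y})) := by
    ext z
    constructor
    · rintro ⟨x, hx, rfl⟩
      by_cases hxy : f x = y
      · exact Or.inl hxy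
      · exact Or.inr ⟨x, ⟨hx, hxy⟩, rfl⟩
    · rintro (rfl | ⟨x, hx, rfl⟩)
      exacts [hy, ⟨x, hx.1, rfl⟩]
  have hy' : y ∉ f '' (s \ f ⁻¹' {y}) := by
    rintro ⟨x, hx, hxy⟩
    exact hx.2 hxy
  rw [himage, ncard_insert_of_notMem hy' (hs.sdiff.image f), hinj.ncard_image,
    ← ncard_inter_add_ncard_sdiff_eq_ncard s (f ⁻¹' {y}) hs]
  omega

def tdrlFront (b : List Bool) (l : List α) : List α :=
  ((l.zip b).filter (fun p => p.2)).map Prod.fst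

def tdrlBack (b : List Bool) (l : List α) : List α :=
  ((l.zip b).filter (fun p => !p.2)).map Prod.fst

theorem tdrl_eq_front_append_back (b : List Bool) (l : List ℕ) :
    tdrl b l = tdrlFront b l ++ tdrlBack b l := rfl

section Cons

variable (b : List Bool) (x : α) (l : List α)

@[simp] theorem tdrlFront_nil_left : tdrlFront [] l = [] := by simp [tdrlFront]
@[simp] theorem tdrlFront_nil_right : tdrlFront b ([] : List α) = [] := by simp [tdrlFront]
@[simp] theorem tdrlBack_nil_left : tdrlBack [] l = [] := by simp [tdrlBack]
@[simp] theorem tdrlBack_nil_right : tdrlBack b ([] : List α) = [] := by simp [tdrlBack]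

@[simp] theorem tdrlFront_cons_true : tdrlFront (true :: b) (x :: l) = x :: tdrlFront b l := by
  simp [tdrlFront]

@[simp] theorem tdrlFront_cons_false : tdrlFront (false :: b) (x :: l) = tdrlFront b l := by
  simp [tdrlFront]

@[simp] theorem tdrlBack_cons_true : tdrlBack (true :: b) (x :: l) = tdrlBack b l := by
  simp [tdrlBack]

@[simp] theorem tdrlBack_cons_false : tdrlBack (false :: b) (x :: l) = x :: tdrlBack b l := by
  simp [tdrlBack]

end Cons

theorem tdrlFront_sublist (b : List Bool) (l : List α) : tdrlFront b l <+ l := by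
  induction l generalizing b with
  | nil => simp
  | cons x l ih => cases b with
    | nil => simp
    | cons c b => cases c <;> simp [ih, (ih b).cons]

theorem tdrlBack_sublist (b : List Bool) (l : List α) : tdrlBack b l <+ l := by
  induction l generalizing b with
  | nil => simp
  | cons x l ih => cases b with
    | nil => simp
    | cons c b => cases c <;> simp [ih, (ih b).cons]

theorem tdrl_perm {b : List Bool} {l : List ℕ} (h : b.length = l.length) : tdrl b l ~ l := by
  have := (filter_append_perm (fun p : ℕ × Bool => p.2) (l.zip b)).map Prod.fst
  rwa [map_append, map_fst_zip h.ge] at this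

theorem eq_of_tdrlFront_eq {l : List α} (hl : l.Nodup) {b b' : List Bool}
    (hb : b.length = l.length) (hb' : b'.length = l.length)
    (h : tdrlFront b l = tdrlFront b' l) : b = b' := by
  induction l generalizing b b' with
  | nil => simp_all
  | cons x l ih =>
    obtain ⟨hx, hl⟩ := nodup_cons.1 hl
    match b, b' with
    | c :: b, c' :: b' =>
      simp only [length_cons, Nat.add_right_cancel_iff] at hb hb'
      cases c <;> cases c' <;>
        simp only [tdrlFront_cons_true, tdrlFront_cons_false, cons.injEq, true_and] at h ⊢
      · exact ih hl hb hb' h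
      · exact (hx ((tdrlFront_sublist b l).subset (h ▸ mem_cons_self))).elim
      · exact (hx ((tdrlFront_sublist b' l).subset (h ▸ mem_cons_self))).elim
      · exact ih hl hb hb' h

theorem tdrlFront_replicate_append (k : ℕ) (b : List Bool) (l : List α) :
    tdrlFront (replicate k true ++ b) l = l.take k ++ tdrlFront b (l.drop k) := by
  induction k generalizing l with
  | zero => simp
  | succ k ih => cases l <;> simp [replicate_succ, ih]

theorem tdrlBack_replicate_append (k : ℕ) (b : List Bool) (l : List α) :
    tdrlBack (replicate k true ++ b) l = tdrlBack b (l.drop k) := by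
  induction k generalizing l with
  | zero => simp
  | succ k ih => cases l <;> simp [replicate_succ, ih]

theorem tdrlFront_replicate_false (m : ℕ) (l : List α) :
    tdrlFront (replicate m false) l = [] := by
  induction m generalizing l with
  | zero => simp
  | succ m ih => cases l <;> simp [replicate_succ, ih]

theorem tdrlBack_replicate_false {m : ℕ} {l : List α} (h : l.length ≤ m) :
    tdrlBack (replicate m false) l = l := by
  induction m generalizing l with
  | zero => simp_all
  | succ m ih => cases l <;> simp_all [replicate_succ]

theorem tdrl_eq_self_of_pairwise {b : List Bool} {l : List ℕ} (hl : l.Pairwise (· < ·))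
    (hb : b.length = l.length) (h : (tdrl b l).Pairwise (· < ·)) : tdrl b l = l :=
  (tdrl_perm hb).eq_of_pairwise' h hl

theorem eq_of_tdrl_eq_of_ne_self {l : List ℕ} (hl : l.Pairwise (· < ·)) {b b' : List Bool}
    (hb : b.length = l.length) (hb' : b'.length = l.length)
    (h : tdrl b l = tdrl b' l) (hne : tdrl b l ≠ l) : b = b' := by
  have hsorted (c : List Bool) :
      (tdrlFront c l).Pairwise (· < ·) ∧ (tdrlBack c l).Pairwise (· < ·) :=
    ⟨hl.sublist (tdrlFront_sublist c l), hl.sublist (tdrlBack_sublist c l)⟩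
  have hlen : (tdrlFront b l).length = (tdrlFront b' l).length := by
    refine le_antisymm (not_lt.1 fun hlt => hne ?_) (not_lt.1 fun hlt => hne ?_)
    · exact tdrl_eq_self_of_pairwise hl hb
        (pairwise_append_of_append_eq_append h hlt (hsorted b).1 (hsorted b').2)
    · rw [h]
      exact tdrl_eq_self_of_pairwise hl hb'
        (pairwise_append_of_append_eq_append h.symm hlt (hsorted b').1 (hsorted b).2)
  exact eq_of_tdrlFront_eq hl.nodup hb hb' (append_inj h hlen).1

def prefixPattern (n k : ℕ) : List Bool := replicate k true ++ replicate (n - k) false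

theorem length_prefixPattern {n k : ℕ} (hk : k ≤ n) : (prefixPattern n k).length = n := by
  simp [prefixPattern, hk]

theorem tdrlFront_prefixPattern (n k : ℕ) (l : List α) :
    tdrlFront (prefixPattern n k) l = l.take k := by
  simp [prefixPattern, tdrlFront_replicate_append, tdrlFront_replicate_false]

theorem tdrl_prefixPattern (k : ℕ) (l : List ℕ) : tdrl (prefixPattern l.length k) l = l := by
  rw [tdrl_eq_front_append_back, tdrlFront_prefixPattern, prefixPattern,
    tdrlBack_replicate_append, tdrlBack_replicate_false (by simp), take_append_drop]

theorem tdrl_fiber_self {l : List ℕ} (hl : l.Nodup) :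
    {b : List Bool | b.length = l.length} ∩ (tdrl · l) ⁻¹' {l} =
      prefixPattern l.length '' Set.Iic l.length := by
  ext b
  simp only [Set.mem_inter_iff, Set.mem_ofPred_eq, Set.mem_preimage, Set.mem_singleton_iff,
    Set.mem_image, Set.mem_Iic]
  constructor
  · rintro ⟨hb, h⟩
    set k := (tdrlFront b l).length
    have hk : k ≤ l.length := (tdrlFront_sublist b l).length_le
    have hfront : tdrlFront b l = l.take k := prefix_iff_eq_take.1 ⟨tdrlBack b l, h⟩
    refine ⟨k, hk, eq_of_tdrlFront_eq hl (length_prefixPattern hk) hb ?_⟩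
    rw [tdrlFront_prefixPattern, hfront]
  · rintro ⟨k, hk, rfl⟩
    exact ⟨length_prefixPattern hk, tdrl_prefixPattern k l⟩

theorem ncard_tdrl_fiber_self {l : List ℕ} (hl : l.Nodup) :
    ({b : List Bool | b.length = l.length} ∩ (tdrl · l) ⁻¹' {l}).ncard = l.length + 1 := by
  rw [tdrl_fiber_self hl, Set.InjOn.ncard_image]
  · simp
  · intro i _ j _ h
    simpa [prefixPattern, count_replicate] using congrArg (count true) h

theorem ncard_setOf_length_eq (n : ℕ) : {b : List Bool | b.length = n}.ncard = 2 ^ n := by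
  change Nat.card (List.Vector Bool n) = 2 ^ n
  simp [Nat.card_eq_fintype_card, card_vector]

theorem ncard_SOut_of_pairwise_lt {l : List ℕ} (hl : l.Pairwise (· < ·)) :
    (SOut l).ncard = 2 ^ l.length - l.length := by
  have hSOut : SOut l = (tdrl · l) '' {b | b.length = l.length} := by
    ext ρ
    simp [SOut]
  have hpatterns := ncard_setOf_length_eq l.length
  have key := Set.ncard_image_add_ncard_fiber (s := {b : List Bool | b.length = l.length})
    (Set.finite_of_ncard_ne_zero (by simp [hpatterns]))
    ⟨prefixPattern l.length 0, length_prefixPattern l.length.zero_le, tdrl_prefixPattern 0 l⟩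
    (fun b hb b' hb' h => eq_of_tdrl_eq_of_ne_self hl hb.1 hb'.1 h hb.2)
  rw [ncard_tdrl_fiber_self hl.nodup, hpatterns, ← hSOut] at key
  have := l.length.lt_two_pow_self
  omega

theorem stmt_3_general (n : ℕ) :
    (SOut (ident n)).ncard = 2 ^ n - n := by
  simpa [ident] using ncard_SOut_of_pairwise_lt (pairwise_lt_range' (s := 1) (n := n))

theorem stmt_3 (n : ℕ) (hn : 1 ≤ n) :
    (SOut (ident n)).ncard = 2 ^ n - n :=
  stmt_3_general n
end

section
/- For every n ≥ 1, the number of permutations ρ of {1,…,n} such that ρ is obtainable from the identity by a single TDRL operation and the identity is obtainable from ρ by a single TDRL operation equals 1 + C(n,2) + C(n,3). -/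
/-!
If `ρ = A ++ B` is a TDRL image of the identity, then `A` and `B` are increasing. If the identity
is a TDRL image of `ρ`, it equals `C ++ D` with `C = [1, …, k]` and `D = [k + 1, …, n]` sublists of
`ρ`, so the values `≤ k` and the values `> k` each occur in increasing order in `ρ`. Cutting `A`
and `B` at `k` then shows that `ρ` is the identity with two adjacent blocks of values `(p, k]` and
`(k, m]` exchanged, and every such block swap is reachable both ways. The block swaps other than
the identity correspond to the triples `p < k < m ≤ n`, and there are
`C(n + 1, 3) = C(n, 2) + C(n, 3)` of them.
-/

section

open List

theorem tdrl_map (P : ℕ → Bool) (l : List ℕ) :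
    tdrl (l.map P) l = l.filter P ++ l.filter (fun x => !P x) := by
  have hz : l.zip (l.map P) = l.map fun x => (x, P x) := by
    simpa using zip_map' (f := id) (g := P) (l := l)
  simp [tdrl, hz, filter_map, Function.comp_def]

theorem exists_tdrl_eq_append {b : List Bool} {l : List ℕ} (h : l.length ≤ b.length) :
    ∃ A B, A <+ l ∧ B <+ l ∧ tdrl b l = A ++ B := by
  have hsub (p : ℕ × Bool → Bool) : (((l.zip b).filter p).map Prod.fst) <+ l := by
    simpa [map_fst_zip h] using (filter_sublist (p := p) (l := l.zip b)).map Prod.fst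
  exact ⟨_, _, hsub _, hsub _, rfl⟩

theorem tdrl_map_blocks {X Y Z W : List ℕ} {P : ℕ → Bool} (hX : ∀ x ∈ X, P x)
    (hY : ∀ x ∈ Y, ¬P x) (hZ : ∀ x ∈ Z, P x) (hW : ∀ x ∈ W, ¬P x) :
    tdrl ((X ++ Y ++ Z ++ W).map P) (X ++ Y ++ Z ++ W) = X ++ Z ++ Y ++ W := by
  rw [tdrl_map]
  simp only [filter_append, filter_eq_self.2 hX, filter_eq_self.2 hZ, filter_eq_nil_iff.2 hY,
    filter_eq_nil_iff.2 hW, (filter_eq_self (p := fun x => !P x) (l := Y)).2 (by simpa using hY),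
    (filter_eq_self (p := fun x => !P x) (l := W)).2 (by simpa using hW),
    (filter_eq_nil_iff (p := fun x => !P x) (l := X)).2 (by simpa using hX),
    (filter_eq_nil_iff (p := fun x => !P x) (l := Z)).2 (by simpa using hZ), append_nil, nil_append,
    append_assoc]

theorem List.Pairwise.filter_le_append_filter_lt {α : Type*} [LinearOrder α] {l : List α}
    (hl : l.Pairwise (· ≤ ·)) (a : α) : l.filter (· ≤ a) ++ l.filter (a < ·) = l := by
  induction l with
  | nil => rfl
  | cons x l ih =>
    rw [pairwise_cons] at hl
    by_cases hx : x ≤ a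
    · simpa [filter_cons, hx] using ih hl.2
    · have hgt : ∀ y ∈ l, a < y := fun y hy => (not_le.1 hx).trans_le (hl.1 y hy)
      rw [filter_cons_of_neg (by simpa using hx), filter_cons_of_pos (by simpa using hx),
        filter_eq_nil_iff.2 (by simpa using hgt), filter_eq_self.2 (by simpa using hgt), nil_append]

theorem filter_eq_of_sublist_of_perm {α : Type*} {p : α → Bool} {l C D : List α} (hC : C <+ l)
    (hl : l ~ C ++ D) (hpC : ∀ x ∈ C, p x) (hpD : ∀ x ∈ D, ¬p x) : l.filter p = C := by
  have hCp : C.filter p = C := filter_eq_self.2 hpC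
  refine ((hCp ▸ hC.filter p).eq_of_length ?_).symm
  rw [(hl.filter p).length_eq, filter_append, hCp, filter_eq_nil_iff.2 hpD, append_nil]

def blockSwap (n p k m : ℕ) : List ℕ :=
  range' 1 p ++ range' (1 + k) (m - k) ++ range' (1 + p) (k - p) ++ range' (1 + m) (n - m)

theorem ident_eq_blocks {n p k m : ℕ} (hpk : p ≤ k) (hkm : k ≤ m) (hmn : m ≤ n) :
    ident n = range' 1 p ++ range' (1 + p) (k - p) ++ range' (1 + k) (m - k) ++
      range' (1 + m) (n - m) :=
  range'_eq_append_iff.2 ⟨m, hmn, (range'_eq_append_iff.2 ⟨k, hkm,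
    (range'_eq_append_iff.2 ⟨p, hpk, rfl, by simp⟩).symm, by simp⟩).symm, by simp⟩

theorem blockSwap_eq_ident {n p k m : ℕ} (hpk : p ≤ k) (hkm : k ≤ m) (hmn : m ≤ n)
    (h : p = k ∨ k = m) : blockSwap n p k m = ident n := by
  rw [ident_eq_blocks hpk hkm hmn]
  rcases h with rfl | rfl <;> simp [blockSwap]

theorem blockSwap_mem_SOut_inter_SIn {n p k m : ℕ} (hpk : p ≤ k) (hkm : k ≤ m) (hmn : m ≤ n) :
    blockSwap n p k m ∈ SOut (ident n) ∩ SIn (ident n) := by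
  have hid := ident_eq_blocks hpk hkm hmn
  refine ⟨⟨(ident n).map fun x => decide (x ≤ p ∨ k < x ∧ x ≤ m), by simp, ?_⟩, ?_,
    (blockSwap n p k m).map (· ≤ k), by simp, ?_⟩
  · rw [hid]
    exact tdrl_map_blocks (by simp; omega) (by simp; omega) (by simp; omega) (by simp; omega)
  · rw [hid, blockSwap]
    simpa only [append_assoc] using (perm_append_comm.append_left _).append_right _
  · rw [hid, blockSwap]
    exact tdrl_map_blocks (by simp; omega) (by simp; omega) (by simp; omega) (by simp; omega)

theorem exists_blockSwap_eq {n : ℕ} {ρ : List ℕ} (hout : ρ ∈ SOut (ident n))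
    (hin : ρ ∈ SIn (ident n)) : ∃ p k m, p ≤ k ∧ k ≤ m ∧ m ≤ n ∧ blockSwap n p k m = ρ := by
  obtain ⟨b, hb, hbρ⟩ := hout
  obtain ⟨hperm, c, hc, hcρ⟩ := hin
  obtain ⟨A, B, hA, hB, hAB⟩ := exists_tdrl_eq_append hb.ge
  obtain ⟨C, D, hC, hD, hCD⟩ := exists_tdrl_eq_append hc.ge
  rw [hbρ] at hAB
  rw [hcρ, ident] at hCD
  obtain ⟨k, hkn, rfl, rfl⟩ := range'_eq_append_iff.1 hCD
  rw [ident, hCD] at hperm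
  simp only [Nat.mul_one] at hD hperm
  have hlow : ρ.filter (· ≤ k) = range' 1 k :=
    filter_eq_of_sublist_of_perm hC hperm (by simp; omega) (by simp; omega)
  have hhigh : ρ.filter (k < ·) = range' (1 + k) (n - k) :=
    filter_eq_of_sublist_of_perm hD (hperm.trans perm_append_comm) (by simp; omega)
      (by simp; omega)
  rw [hAB, filter_append] at hlow hhigh
  obtain ⟨a, hak, hAlow, hBlow⟩ := range'_eq_append_iff.1 hlow.symm
  obtain ⟨d, hd, hAhigh, hBhigh⟩ := range'_eq_append_iff.1 hhigh.symm
  have hsorted : (ident n).Pairwise (· ≤ ·) := (pairwise_lt_range' 1).imp le_of_lt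
  refine ⟨a, k, k + d, hak, by omega, by omega, ?_⟩
  rw [hAB, ← (hsorted.sublist hA).filter_le_append_filter_lt k,
    ← (hsorted.sublist hB).filter_le_append_filter_lt k, hAlow, hBlow, hAhigh, hBhigh, blockSwap]
  simp only [Nat.mul_one, Nat.add_sub_cancel_left, Nat.sub_sub, Nat.add_assoc, append_assoc]

theorem le_of_range'_append_cons_eq {s i j x : ℕ} {L M : List ℕ}
    (h : range' s i ++ x :: L = range' s j ++ M) (hx : x ≠ s + i) : j ≤ i := by
  by_contra! hij
  have := congrArg (·[i]?) h
  simp [getElem?_append_left, hij] at this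
  exact hx this

theorem blockSwap_eq_cons {n p k m : ℕ} (hpk : p < k) (hkm : k < m) :
    blockSwap n p k m = range' 1 p ++ (1 + k) :: (range' (2 + k) (m - k - 1) ++
      (1 + p) :: (range' (2 + p) (k - p - 1) ++ range' (1 + m) (n - m))) := by
  obtain ⟨a, ha⟩ : ∃ a, m - k = a + 1 := ⟨m - k - 1, by omega⟩
  obtain ⟨b, hb⟩ : ∃ b, k - p = b + 1 := ⟨k - p - 1, by omega⟩
  simp only [blockSwap, ha, hb, range'_succ, append_assoc, cons_append, Nat.add_sub_cancel]
  rw [show 1 + k + 1 = 2 + k by omega, show 1 + p + 1 = 2 + p by omega]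

theorem blockSwap_ne_ident {n p k m : ℕ} (hpk : p < k) (hkm : k < m) (hmn : m ≤ n) :
    blockSwap n p k m ≠ ident n := by
  intro h
  rw [blockSwap_eq_cons hpk hkm, ident, ← append_nil (range' 1 n)] at h
  have := le_of_range'_append_cons_eq h (by omega)
  omega

theorem blockSwap_inj {n p k m p' k' m' : ℕ} (hpk : p < k) (hkm : k < m) (hpk' : p' < k')
    (hkm' : k' < m') (h : blockSwap n p k m = blockSwap n p' k' m') :
    p = p' ∧ k = k' ∧ m = m' := by
  rw [blockSwap_eq_cons hpk hkm, blockSwap_eq_cons hpk' hkm'] at h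
  obtain rfl : p = p' := le_antisymm (le_of_range'_append_cons_eq h.symm (by omega))
    (le_of_range'_append_cons_eq h (by omega))
  obtain ⟨hkk', h⟩ := cons.inj (append_cancel_left h)
  obtain rfl : k = k' := by omega
  have := le_of_range'_append_cons_eq h (by omega)
  have := le_of_range'_append_cons_eq h.symm (by omega)
  omega

theorem sum_range_choose_eq_choose_succ (N j : ℕ) :
    ∑ i ∈ Finset.range N, i.choose j = N.choose (j + 1) := by
  induction N with
  | zero => simp
  | succ N ih => rw [Finset.sum_range_succ, ih, Nat.choose_succ_succ', add_comm]

def increasingTriples (N : ℕ) : Finset (Σ _ : ℕ, Σ _ : ℕ, ℕ) :=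
  (Finset.range N).sigma fun m => (Finset.range m).sigma fun k => Finset.range k

theorem mem_increasingTriples {N m k p : ℕ} :
    ⟨m, k, p⟩ ∈ increasingTriples N ↔ p < k ∧ k < m ∧ m < N := by
  simp [increasingTriples]
  tauto

theorem card_increasingTriples (N : ℕ) : (increasingTriples N).card = N.choose 3 := by
  simp only [increasingTriples, Finset.card_sigma, Finset.card_range]
  calc ∑ m ∈ Finset.range N, ∑ k ∈ Finset.range m, k
      = ∑ m ∈ Finset.range N, m.choose 2 := by
        simp_rw [← sum_range_choose_eq_choose_succ _ 1, Nat.choose_one_right]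
    _ = N.choose 3 := sum_range_choose_eq_choose_succ N 2

def blockSwapOfTriple (n : ℕ) (t : Σ _ : ℕ, Σ _ : ℕ, ℕ) : List ℕ :=
  blockSwap n t.2.2 t.2.1 t.1

theorem SOut_ident_inter_SIn_ident (n : ℕ) :
    SOut (ident n) ∩ SIn (ident n) =
      insert (ident n) (blockSwapOfTriple n '' ↑(increasingTriples (n + 1))) := by
  ext ρ
  constructor
  · rintro ⟨hout, hin⟩
    obtain ⟨p, k, m, hpk, hkm, hmn, rfl⟩ := exists_blockSwap_eq hout hin
    by_cases h : p = k ∨ k = m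
    · exact Or.inl (blockSwap_eq_ident hpk hkm hmn h)
    · exact Or.inr ⟨⟨m, k, p⟩, mem_increasingTriples.2 (by omega), rfl⟩
  · rintro (rfl | ⟨⟨m, k, p⟩, ht, rfl⟩)
    · simpa [blockSwap_eq_ident] using blockSwap_mem_SOut_inter_SIn le_rfl le_rfl (Nat.zero_le n)
    · obtain ⟨hpk, hkm, hmn⟩ := mem_increasingTriples.1 ht
      exact blockSwap_mem_SOut_inter_SIn hpk.le hkm.le (Nat.le_of_lt_succ hmn)

end

theorem stmt_7_general (n : ℕ) :
    (SOut (ident n) ∩ SIn (ident n)).ncard = 1 + n.choose 2 + n.choose 3 := by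
  have hident : ident n ∉ blockSwapOfTriple n '' ↑(increasingTriples (n + 1)) := by
    rintro ⟨⟨m, k, p⟩, ht, h⟩
    obtain ⟨hpk, hkm, hmn⟩ := mem_increasingTriples.1 ht
    exact blockSwap_ne_ident hpk hkm (by omega) h
  have hinj : Set.InjOn (blockSwapOfTriple n) ↑(increasingTriples (n + 1)) := by
    rintro ⟨m, k, p⟩ ht ⟨m', k', p'⟩ ht' h
    obtain ⟨hpk, hkm, -⟩ := mem_increasingTriples.1 ht
    obtain ⟨hpk', hkm', -⟩ := mem_increasingTriples.1 ht'
    obtain ⟨rfl, rfl, rfl⟩ := blockSwap_inj hpk hkm hpk' hkm' h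
    rfl
  rw [SOut_ident_inter_SIn_ident, Set.ncard_insert_of_notMem hident, hinj.ncard_image,
    Set.ncard_coe_finset, card_increasingTriples, Nat.choose_succ_succ n 2]
  ring

theorem stmt_7 (n : ℕ) (hn : 1 ≤ n) :
    (SOut (ident n) ∩ SIn (ident n)).ncard = 1 + n.choose 2 + n.choose 3 :=
  stmt_7_general n
end

section
/- For n ≥ 2, let π = (2,3,…,n,1) be the cyclic shift of the identity. Then |S_out(identity) ∩ S_out(π)| ≥ 2^{n−1}. -/
/-!
Write the identity as `1 :: r` and its cyclic shift as `r ++ [1]`. For every pattern `c` on `r`,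
the pattern `false :: c` on `1 :: r` and the pattern `c ++ [true]` on `r ++ [1]` both produce
the entries of `r` selected by `c`, then `1`, then the remaining entries of `r`. Since `1 ∉ r` and
the entries of `r` are distinct, this output determines `c`, which gives `2 ^ (n - 1)` distinct
common elements of the two out-sets.
-/

lemma ncard_setOf_length_eq_s9 (α : Type*) [Fintype α] (m : ℕ) :
    {l : List α | l.length = m}.ncard = Fintype.card α ^ m := by
  rw [← Nat.card_coe_set_eq, ← card_vector, ← Nat.card_eq_fintype_card]
  rfl

section ZipFilter

variable {α β : Type*}

lemma mem_of_mem_map_fst_filter_zip {a : α} {l : List α} {b : List β} {p : α × β → Bool}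
    (h : a ∈ ((l.zip b).filter p).map Prod.fst) : a ∈ l := by
  obtain ⟨⟨a, _⟩, hab, rfl⟩ := List.mem_map.mp h
  exact (List.of_mem_zip (List.mem_of_mem_filter hab)).1

lemma map_fst_filter_zip_injOn {l : List α} (hl : l.Nodup) :
    Set.InjOn (fun b : List Bool => ((l.zip b).filter (·.2)).map Prod.fst)
      {b | b.length = l.length} := by
  induction l with
  | nil => intro b hb b' hb' _; simp_all
  | cons a t ih =>
    rintro (_ | ⟨x, b⟩) hb (_ | ⟨x', b'⟩) hb' h
    · rfl
    all_goals simp only [Set.mem_ofPred_eq, List.length_cons, List.length_nil,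
      Nat.add_right_cancel_iff] at hb hb'
    any_goals omega
    obtain ⟨ha, ht⟩ := List.nodup_cons.mp hl
    have hnotMem (c : List Bool) : a ∉ ((t.zip c).filter (·.2)).map Prod.fst :=
      fun hm => ha (mem_of_mem_map_fst_filter_zip hm)
    cases x <;> cases x' <;> simp only [List.zip_cons_cons, List.filter_cons, List.map_cons,
      ite_true, List.cons.injEq, true_and] at h ⊢
    · exact ih ht hb hb' h
    · exact absurd (h ▸ List.mem_cons_self) (hnotMem b)
    · exact absurd (h.symm ▸ List.mem_cons_self) (hnotMem b')
    · exact ih ht hb hb' h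

end ZipFilter

section TDRL

variable {x : ℕ} {l : List ℕ}

lemma tdrl_false_cons (c : List Bool) :
    tdrl (false :: c) (x :: l) = ((l.zip c).filter (·.2)).map Prod.fst ++
      x :: ((l.zip c).filter (!·.2)).map Prod.fst := by
  simp [tdrl]

lemma tdrl_false_cons_eq_tdrl_append_true {c : List Bool} (hc : c.length = l.length) :
    tdrl (false :: c) (x :: l) = tdrl (c ++ [true]) (l ++ [x]) := by
  simp [tdrl, List.zip_append hc.symm]

lemma tdrl_false_cons_injOn (hx : x ∉ l) (hl : l.Nodup) :
    Set.InjOn (fun c => tdrl (false :: c) (x :: l)) {c | c.length = l.length} := by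
  intro c hc c' hc' h
  simp only [tdrl_false_cons] at h
  rw [List.append_cons_inj_of_notMem (fun hm => hx (mem_of_mem_map_fst_filter_zip hm))
    (fun hm => hx (mem_of_mem_map_fst_filter_zip hm))] at h
  exact map_fst_filter_zip_injOn hl hc hc' h.1

lemma SOut_finite (π : List ℕ) : (SOut π).Finite :=
  ((List.finite_length_eq Bool π.length).image (tdrl · π)).subset
    fun _ ⟨b, hb, hρ⟩ => ⟨b, hb, hρ⟩

lemma image_tdrl_false_cons_subset_SOut_inter :
    (fun c => tdrl (false :: c) (x :: l)) '' {c | c.length = l.length} ⊆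
      SOut (x :: l) ∩ SOut (l ++ [x]) := by
  rintro _ ⟨c, hc, rfl⟩
  exact ⟨⟨false :: c, by simpa using hc, rfl⟩,
    ⟨c ++ [true], by simpa using hc, (tdrl_false_cons_eq_tdrl_append_true hc).symm⟩⟩

lemma two_pow_length_le_ncard_SOut_cons_inter_SOut_concat (hx : x ∉ l) (hl : l.Nodup) :
    2 ^ l.length ≤ (SOut (x :: l) ∩ SOut (l ++ [x])).ncard := by
  calc 2 ^ l.length
      = ((fun c => tdrl (false :: c) (x :: l)) '' {c | c.length = l.length}).ncard := by
        rw [(tdrl_false_cons_injOn hx hl).ncard_image, ncard_setOf_length_eq_s9,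
          Fintype.card_bool]
    _ ≤ _ := Set.ncard_le_ncard image_tdrl_false_cons_subset_SOut_inter
        ((SOut_finite _).inter_of_left _)

end TDRL

theorem stmt_9 (n : ℕ) (hn : 2 ≤ n) :
    2 ^ (n - 1) ≤ (SOut (ident n) ∩ SOut (List.range' 2 (n - 1) ++ [1])).ncard := by
  have hident : ident n = 1 :: List.range' 2 (n - 1) := by
    obtain ⟨m, rfl⟩ : ∃ m, n = m + 1 := ⟨n - 1, by omega⟩
    simp [ident, List.range'_succ]
  rw [hident]
  simpa using two_pow_length_le_ncard_SOut_cons_inter_SOut_concat (x := 1)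
    (l := List.range' 2 (n - 1)) (by simp) List.nodup_range'
end

section
/- For every n ≥ 3, any permutation π of {1,…,n} is uniquely determined by any 2^{n−1} + 1 distinct elements of S_out(π); that is, if π ≠ ρ are permutations of {1,…,n} with n ≥ 3, then |S_out(π) ∩ S_out(ρ)| ≤ 2^{n−1}. -/
/-!
Since `π ≠ ρ` list the same entries, some `x` precedes `y` in `π` while `y` precedes `x` in
`ρ`. On a duplicate-free list a TDRL is determined by the set `T` of entries it sends to the
front. A common output `σ` of `π` and `ρ` has either `x` before `y`, and then, read as a TDRL
of `ρ`, it must send `x` to the front and `y` to the back; or `y` before `x`, and then, read as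
a TDRL of `π`, it must send `y` to the front and `x` to the back. Each case leaves
`2 ^ (n - 2)` choices for `T`, so there are at most `2 ^ (n - 1)` common outputs.
-/

namespace List

variable {α : Type*} {l l₁ l₂ : List α} {x y : α}

theorem Nodup.not_pair_sublist_swap (hl : l.Nodup) (h : [x, y] <+ l) : ¬[y, x] <+ l := by
  induction l with
  | nil => simp at h
  | cons a t ih => grind [nodup_cons, Sublist.subset, cons_sublist_cons']

theorem pair_sublist_or_swap (hx : x ∈ l) (hy : y ∈ l) (hxy : x ≠ y) :
    [x, y] <+ l ∨ [y, x] <+ l := by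
  induction l with
  | nil => simp at hx
  | cons a t ih => grind [cons_sublist_cons']

theorem Perm.eq_of_forall_pair_sublist (hp : l₁ ~ l₂) (hl : l.Nodup)
    (h₁ : ∀ x y, [x, y] <+ l₁ → [x, y] <+ l)
    (h₂ : ∀ x y, [x, y] <+ l₂ → [x, y] <+ l) :
    l₁ = l₂ :=
  hp.eq_of_pairwise (fun _ _ _ _ hab hba => (hl.not_pair_sublist_swap hab hba).elim)
    (pairwise_iff_forall_sublist.2 (h₁ _ _)) (pairwise_iff_forall_sublist.2 (h₂ _ _))

theorem Sublist.filter_mem_eq [DecidableEq α] (h : l₁ <+ l) (hl : l.Nodup) :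
    l.filter (· ∈ l₁) = l₁ := by
  refine Perm.eq_of_forall_pair_sublist ?_ hl (fun _ _ h' => h'.trans filter_sublist)
    (fun _ _ h' => h'.trans h)
  rw [perm_ext_iff_of_nodup (hl.filter _) (hl.sublist h)]
  grind [Sublist.subset]

theorem Perm.exists_pair_sublist_swap_of_ne (hp : l₁ ~ l₂) (hl₂ : l₂.Nodup)
    (hne : l₁ ≠ l₂) :
    ∃ x y, [x, y] <+ l₁ ∧ [y, x] <+ l₂ := by
  by_contra! h
  refine hne (hp.eq_of_forall_pair_sublist hl₂ (fun x y hxy => ?_) fun _ _ => id)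
  have hxy' : x ≠ y := by simpa using (hp.nodup_iff.2 hl₂).sublist hxy
  have hx : x ∈ l₂ := hp.subset (hxy.subset (by simp))
  have hy : y ∈ l₂ := hp.subset (hxy.subset (by simp))
  exact (pair_sublist_or_swap hx hy hxy').resolve_right (h x y hxy)

end List

open Finset List

section TdrlSet

variable {α : Type*} [DecidableEq α] {l : List α} {x y : α}

def tdrlSet (T : Finset α) (l : List α) : List α :=
  l.filter (· ∈ T) ++ l.filter (· ∉ T)

theorem tdrlSet_perm (T : Finset α) (l : List α) : tdrlSet T l ~ l := by
  simpa [tdrlSet] using filter_append_perm (· ∈ T) l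

theorem pair_sublist_tdrlSet {T : Finset α} (h : [y, x] <+ l) (hT : ¬(x ∈ T ∧ y ∉ T)) :
    [y, x] <+ tdrlSet T l := by
  have hx : x ∈ l := h.subset (by simp)
  have hy : y ∈ l := h.subset (by simp)
  by_cases hxT : x ∈ T <;> by_cases hyT : y ∈ T
  · have : [y, x] <+ l.filter (· ∈ T) := by simpa [hxT, hyT] using h.filter (· ∈ T)
    exact this.trans (sublist_append_left _ _)
  · exact absurd ⟨hxT, hyT⟩ hT
  · exact (singleton_sublist.2 (by simp [hy, hyT])).append
      (singleton_sublist.2 (by simp [hx, hxT]))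
  · have : [y, x] <+ l.filter (· ∉ T) := by simpa [hxT, hyT] using h.filter (· ∉ T)
    exact this.trans (sublist_append_right _ _)

theorem mem_and_not_mem_of_pair_sublist_tdrlSet {T : Finset α} (hl : l.Nodup)
    (hyx : [y, x] <+ l) (hxy : [x, y] <+ tdrlSet T l) : x ∈ T ∧ y ∉ T := by
  by_contra hT
  exact ((tdrlSet_perm T l).nodup_iff.2 hl).not_pair_sublist_swap hxy
    (pair_sublist_tdrlSet hyx hT)

theorem append_eq_tdrlSet {A B : List α} (hl : l.Nodup) (hA : A <+ l) (hB : B <+ l)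
    (hAB : A ++ B ~ l) : A ++ B = tdrlSet A.toFinset l := by
  have hdisj := hAB.nodup_iff.2 hl
  rw [nodup_append] at hdisj
  have hB' : l.filter (· ∉ A) = l.filter (· ∈ B) := by
    refine filter_congr fun z hz => ?_
    have := hAB.subset
    grind
  simp only [tdrlSet, mem_toFinset]
  rw [hB', hA.filter_mem_eq hl, hB.filter_mem_eq hl]

def separatingTdrls (F : Finset α) (x y : α) (l : List α) : Finset (List α) :=
  ((F \ {x, y}).powerset.image (insert x)).image (tdrlSet · l)

theorem tdrlSet_mem_separatingTdrls {F T : Finset α} (hT : T ⊆ F) (hx : x ∈ T) (hy : y ∉ T) :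
    tdrlSet T l ∈ separatingTdrls F x y l :=
  mem_image_of_mem _ <| mem_image.2 ⟨T.erase x, mem_powerset.2 fun z hz => by grind,
    insert_erase hx⟩

theorem card_separatingTdrls_le (F : Finset α) (x y : α) (l : List α) :
    #(separatingTdrls F x y l) ≤ 2 ^ #(F \ {x, y}) :=
  card_image_le.trans (card_image_le.trans (card_powerset _).le)

end TdrlSet

theorem exists_tdrlSet_of_mem_SOut {l σ : List ℕ} (hl : l.Nodup) (h : σ ∈ SOut l) :
    ∃ T ⊆ l.toFinset, σ = tdrlSet T l := by
  obtain ⟨b, hb, rfl⟩ := h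
  have hfst : (l.zip b).map Prod.fst = l := map_fst_zip hb.ge
  have hsub : ∀ p, ((l.zip b).filter p).map Prod.fst <+ l := fun p => by
    simpa only [hfst] using (filter_sublist (p := p) (l := l.zip b)).map Prod.fst
  have hperm : tdrl b l ~ l := by
    rw [tdrl, ← map_append]
    conv_rhs => rw [← hfst]
    exact (filter_append_perm _ _).map _
  exact ⟨_, fun z hz => mem_toFinset.2 ((hsub _).subset (mem_toFinset.1 hz)),
    append_eq_tdrlSet hl (hsub _) (hsub _) hperm⟩

theorem SOut_inter_subset {π ρ : List ℕ} {x y : ℕ} (hp : π ~ ρ) (hρ : ρ.Nodup)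
    (hxy : [x, y] <+ π) (hyx : [y, x] <+ ρ) :
    SOut π ∩ SOut ρ ⊆
      ↑(separatingTdrls ρ.toFinset x y ρ ∪ separatingTdrls ρ.toFinset y x π) := by
  rintro σ ⟨hσπ, hσρ⟩
  have hπ : π.Nodup := hp.nodup_iff.2 hρ
  obtain ⟨T, hTρ, rfl⟩ := exists_tdrlSet_of_mem_SOut hρ hσρ
  obtain ⟨T', hTπ, hσ⟩ := exists_tdrlSet_of_mem_SOut hπ hσπ
  rw [toFinset_eq_of_perm _ _ hp] at hTπ
  have hne : x ≠ y := by simpa using hπ.sublist hxy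
  have hx : x ∈ tdrlSet T ρ := (tdrlSet_perm T ρ).symm.subset (hyx.subset (by simp))
  have hy : y ∈ tdrlSet T ρ := (tdrlSet_perm T ρ).symm.subset (hyx.subset (by simp))
  rw [coe_union, Set.mem_union, mem_coe, mem_coe]
  rcases pair_sublist_or_swap hx hy hne with h | h
  · obtain ⟨hxT, hyT⟩ := mem_and_not_mem_of_pair_sublist_tdrlSet hρ hyx h
    exact Or.inl (tdrlSet_mem_separatingTdrls hTρ hxT hyT)
  · rw [hσ] at h ⊢
    obtain ⟨hyT', hxT'⟩ := mem_and_not_mem_of_pair_sublist_tdrlSet hπ hxy h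
    exact Or.inr (tdrlSet_mem_separatingTdrls hTπ hyT' hxT')

theorem ncard_SOut_inter_le {π ρ : List ℕ} (hp : π ~ ρ) (hρ : ρ.Nodup) (hne : π ≠ ρ) :
    (SOut π ∩ SOut ρ).ncard ≤ 2 ^ (ρ.length - 1) := by
  obtain ⟨x, y, hxy, hyx⟩ := hp.exists_pair_sublist_swap_of_ne hρ hne
  have hk : #(ρ.toFinset \ {x, y}) + 2 = ρ.length := by
    have hxy' : x ≠ y := by simpa using (hp.nodup_iff.2 hρ).sublist hxy
    have hx : x ∈ ρ := hyx.subset (by simp)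
    have hy : y ∈ ρ := hyx.subset (by simp)
    rw [← card_pair hxy', card_sdiff_add_card_eq_card, toFinset_card_of_nodup hρ]
    simp [insert_subset_iff, hx, hy]
  calc (SOut π ∩ SOut ρ).ncard
      ≤ #(separatingTdrls ρ.toFinset x y ρ ∪ separatingTdrls ρ.toFinset y x π) :=
        (Set.ncard_le_ncard (SOut_inter_subset hp hρ hxy hyx)).trans (Set.ncard_coe_finset _).le
    _ ≤ 2 ^ #(ρ.toFinset \ {x, y}) + 2 ^ #(ρ.toFinset \ {x, y}) :=
      (card_union_le _ _).trans <| add_le_add (card_separatingTdrls_le ..)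
        ((card_separatingTdrls_le ..).trans_eq (by rw [pair_comm]))
    _ = 2 ^ (ρ.length - 1) := by rw [← two_mul, ← pow_succ', ← hk]; rfl

theorem stmt_10_general (n : ℕ) (π ρ : List ℕ)
    (hπ : IsPermOf n π) (hρ : IsPermOf n ρ) (hne : π ≠ ρ) :
    (SOut π ∩ SOut ρ).ncard ≤ 2 ^ (n - 1) := by
  have hρn : ρ.Nodup := hρ.nodup_iff.2 (nodup_range' ..)
  simpa [hρ.length_eq, ident] using ncard_SOut_inter_le (hπ.trans hρ.symm) hρn hne

theorem stmt_10 (n : ℕ) (hn : 3 ≤ n) (π ρ : List ℕ)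
    (hπ : IsPermOf n π) (hρ : IsPermOf n ρ) (hne : π ≠ ρ) :
    (SOut π ∩ SOut ρ).ncard ≤ 2 ^ (n - 1) :=
  stmt_10_general n π ρ hπ hρ hne
end

section
/- For every n ≥ 1 and every b ∈ {0,1}^{n−1}, the MTDRL operations with patterns b·1 and b·0 (differing only in the last bit) produce the same permutation when applied to any permutation π of {1,…,n}; moreover, distinct patterns of the form b·1 applied to the identity produce distinct permutations. -/
/-
Adding an entry `a` in front of the sequence either puts `a` at the front of the output
(bit `1`) or at its back (bit `0`), so the output is built by induction along the pattern.
The last entry of the sequence goes to the junction of the two parts, whatever its bit, which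
gives the first claim. For a sequence without repetitions the first bit is read off from
whether the output starts with the first entry of the sequence; this recovers all bits but the
last one.
-/

namespace List

lemma append_singleton_ne_cons {α : Type*} {M M' : List α} {a : α} (hM : M ≠ []) (ha : a ∉ M) :
    M ++ [a] ≠ a :: M' := by
  obtain ⟨y, M, rfl⟩ := exists_cons_of_ne_nil hM
  rintro ⟨rfl, -⟩
  exact ha mem_cons_self

end List

@[simp]
lemma mtdrl_nil_right (b : List Bool) : mtdrl b [] = [] := by
  simp [mtdrl]

@[simp]
lemma mtdrl_cons_true (b : List Bool) (a : ℕ) (l : List ℕ) :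
    mtdrl (true :: b) (a :: l) = a :: mtdrl b l := by
  simp [mtdrl]

@[simp]
lemma mtdrl_cons_false (b : List Bool) (a : ℕ) (l : List ℕ) :
    mtdrl (false :: b) (a :: l) = mtdrl b l ++ [a] := by
  simp [mtdrl]

lemma mtdrl_perm {b : List Bool} {l : List ℕ} (h : b.length = l.length) :
    (mtdrl b l).Perm l := by
  induction l generalizing b with
  | nil => simp
  | cons a l ih =>
    obtain ⟨c, b, rfl⟩ := List.exists_cons_of_length_eq_add_one h
    have hb : b.length = l.length := by simpa using h
    cases c
    · simpa using ((ih hb).append_right [a]).trans (List.perm_append_singleton _ _)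
    · simpa using ih hb

lemma mtdrl_append_true_eq_append_false {b : List Bool} {l : List ℕ}
    (h : l.length ≤ b.length + 1) :
    mtdrl (b ++ [true]) l = mtdrl (b ++ [false]) l := by
  induction b generalizing l with
  | nil =>
    match l, h with
    | [], _ => simp
    | [a], _ => simp
  | cons c b ih =>
    cases l with
    | nil => simp
    | cons a l =>
      have hl : l.length ≤ b.length + 1 := by simpa using h
      cases c <;> simp [ih hl]

lemma mtdrl_append_true_injective {l : List ℕ} (hl : l.Nodup) {b b' : List Bool}
    (hb : b.length = l.length - 1) (hb' : b'.length = l.length - 1)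
    (h : mtdrl (b ++ [true]) l = mtdrl (b' ++ [true]) l) : b = b' := by
  induction l generalizing b b' with
  | nil => simp_all
  | cons a l ih =>
    obtain ⟨ha, hl⟩ := List.nodup_cons.1 hl
    rcases b with _ | ⟨c, t⟩ <;> rcases b' with _ | ⟨c', t'⟩
    · rfl
    all_goals simp only [List.length_cons, add_tsub_cancel_right] at hb hb'
    · simp [← hb] at hb'
    · simp [← hb'] at hb
    have hl_ne : l ≠ [] := by
      rintro rfl
      simp at hb
    have output_perm {u : List Bool} (hu : u.length + 1 = l.length) :
        (mtdrl (u ++ [true]) l).Perm l :=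
      mtdrl_perm (by simpa using hu)
    have front_ne_back {u u' : List Bool} (hu : u.length + 1 = l.length) :
        mtdrl (u ++ [true]) l ++ [a] ≠ a :: mtdrl (u' ++ [true]) l :=
      List.append_singleton_ne_cons (fun he => hl_ne (he ▸ output_perm hu).symm.eq_nil)
        (fun hmem => ha ((output_perm hu).subset hmem))
    have ht : t.length = l.length - 1 := by omega
    have ht' : t'.length = l.length - 1 := by omega
    cases c <;> cases c' <;> simp only [List.cons_append, mtdrl_cons_true, mtdrl_cons_false] at h
    · rw [ih hl ht ht' (List.append_cancel_right h)]
    · exact absurd h (front_ne_back (by omega))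
    · exact absurd h.symm (front_ne_back (by omega))
    · rw [ih hl ht ht' (List.cons_inj_right a |>.1 h)]

theorem stmt_15_general (n : ℕ) :
    (∀ π : List ℕ, IsPermOf n π → ∀ b : List Bool, b.length = n - 1 →
      mtdrl (b ++ [true]) π = mtdrl (b ++ [false]) π) ∧
    (∀ b b' : List Bool, b.length = n - 1 → b'.length = n - 1 →
      mtdrl (b ++ [true]) (ident n) = mtdrl (b' ++ [true]) (ident n) → b = b') := by
  refine ⟨fun π hπ b hb => mtdrl_append_true_eq_append_false ?_,
    fun b b' hb hb' => mtdrl_append_true_injective List.nodup_range' ?_ ?_⟩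
  · rw [hπ.length_eq, ident, List.length_range']
    omega
  all_goals simpa [ident]

theorem stmt_15 (n : ℕ) (hn : 1 ≤ n) :
    (∀ π : List ℕ, IsPermOf n π → ∀ b : List Bool, b.length = n - 1 →
      mtdrl (b ++ [true]) π = mtdrl (b ++ [false]) π) ∧
    (∀ b b' : List Bool, b.length = n - 1 → b'.length = n - 1 →
      mtdrl (b ++ [true]) (ident n) = mtdrl (b' ++ [true]) (ident n) → b = b') :=
  stmt_15_general n
end

section
/- For every n ≥ 2, the maximum over distinct permutations π, ρ of {1,…,n} of |S_mout(π) ∩ S_mout(ρ)| equals 2^{n−1}; in particular, for π = (1,2,…,n−2,n,n−1) (the identity with last two entries swapped), S_mout(identity) ⊆ S_mout(π). -/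
/-!
An MTDRL pattern on `l ++ [x]` always puts `x` between the kept entries of `l` and the reversed
dropped ones, so the bit of the last entry is irrelevant, and when `l` has no repetitions the
remaining bits are recovered from the kept entries: hence `|S_mout(π)| = 2^(n-1)`, which bounds
every intersection. Equality is attained because swapping the last two entries of `π` is undone
by flipping the bit of the penultimate entry, so `S_mout(id) ⊆ S_mout(π)` for that swap `π`.
-/

section

variable {α : Type*}

def trueEntries (b : List Bool) (l : List α) : List α :=
  ((l.zip b).filter (fun p => p.2)).map Prod.fst

def falseEntries (b : List Bool) (l : List α) : List α :=
  ((l.zip b).filter (fun p => !p.2)).map Prod.fst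

theorem mem_of_mem_trueEntries {x : α} {b : List Bool} {l : List α}
    (h : x ∈ trueEntries b l) : x ∈ l := by
  obtain ⟨p, hp, rfl⟩ := List.mem_map.mp h
  exact (List.of_mem_zip (List.mem_of_mem_filter hp)).1

theorem mem_of_mem_falseEntries {x : α} {b : List Bool} {l : List α}
    (h : x ∈ falseEntries b l) : x ∈ l := by
  obtain ⟨p, hp, rfl⟩ := List.mem_map.mp h
  exact (List.of_mem_zip (List.mem_of_mem_filter hp)).1

theorem map_mem_trueEntries [DecidableEq α] {l : List α} (hl : l.Nodup) {b : List Bool}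
    (hb : b.length = l.length) : l.map (fun x => decide (x ∈ trueEntries b l)) = b := by
  induction l generalizing b with
  | nil => simp_all
  | cons z t ih =>
    obtain _ | ⟨β, b⟩ := b
    · simp at hb
    obtain ⟨hz, ht⟩ := List.nodup_cons.mp hl
    have hzt : z ∉ trueEntries b t := fun h => hz (mem_of_mem_trueEntries h)
    have htail : t.map (fun x => decide (x ∈ trueEntries (β :: b) (z :: t))) = b := by
      refine (List.map_congr_left fun x hx => ?_).trans (ih ht (by simpa using hb))
      have hxz : x ≠ z := fun h => hz (h ▸ hx)
      cases β <;> simp [trueEntries, hxz]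
    cases β <;> simp_all [trueEntries]

theorem trueEntries_injOn {l : List α} (hl : l.Nodup) :
    Set.InjOn (trueEntries · l) {b | b.length = l.length} := by
  classical
  intro b hb b' hb' h
  rw [← map_mem_trueEntries hl hb, ← map_mem_trueEntries hl hb']
  simp only at h
  rw [h]

theorem ncard_length_eq (m : ℕ) : {b : List Bool | b.length = m}.ncard = 2 ^ m := by
  rw [← Nat.card_coe_set_eq]
  change Nat.card (List.Vector Bool m) = _
  simp [Nat.card_eq_fintype_card, card_vector]

theorem SMOut_eq_image (π : List ℕ) :
    SMOut π = (mtdrl · π) '' {b | b.length = π.length} := rfl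

theorem SMOut_finite (π : List ℕ) : (SMOut π).Finite := by
  rw [SMOut_eq_image]
  exact (Set.finite_of_ncard_ne_zero (by simp [ncard_length_eq])).image _

theorem mtdrl_append_singleton {b : List Bool} {l : List ℕ} (hb : b.length = l.length)
    (β : Bool) (x : ℕ) :
    mtdrl (b ++ [β]) (l ++ [x]) = trueEntries b l ++ x :: (falseEntries b l).reverse := by
  cases β <;> simp [mtdrl, trueEntries, falseEntries, List.zip_append hb.symm]

theorem SMOut_append_singleton (l : List ℕ) (x : ℕ) :
    SMOut (l ++ [x]) = (fun b => trueEntries b l ++ x :: (falseEntries b l).reverse) ''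
      {b | b.length = l.length} := by
  ext τ
  constructor
  · rintro ⟨b, hb, rfl⟩
    obtain rfl | ⟨b, β, rfl⟩ := b.eq_nil_or_concat'
    · simp at hb
    have hb : b.length = l.length := by simpa using hb
    exact ⟨b, hb, (mtdrl_append_singleton hb β x).symm⟩
  · rintro ⟨b, hb, rfl⟩
    exact ⟨b ++ [true], by simpa using hb, mtdrl_append_singleton hb true x⟩

theorem ncard_SMOut {π : List ℕ} (hπ : π.Nodup) (hne : π ≠ []) :
    (SMOut π).ncard = 2 ^ (π.length - 1) := by
  obtain ⟨l, x, rfl⟩ := (π.eq_nil_or_concat').resolve_left hne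
  obtain ⟨hxl, hl⟩ := List.nodup_cons.mp (List.nodup_append_comm.mp hπ)
  rw [SMOut_append_singleton, Set.InjOn.ncard_image, ncard_length_eq]
  · simp
  intro b hb b' hb' h
  have hxb : x ∉ trueEntries b l := fun h => hxl (mem_of_mem_trueEntries h)
  have hxf : x ∉ (falseEntries b l).reverse :=
    fun h => hxl (mem_of_mem_falseEntries (List.mem_reverse.mp h))
  exact trueEntries_injOn hl hb hb' ((List.append_cons_inj_of_notMem hxb hxf).mp h).1

theorem mtdrl_swap_last_two {b : List Bool} {l : List ℕ} (hb : b.length = l.length)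
    (β γ : Bool) (x y : ℕ) :
    mtdrl (b ++ [!β, β]) (l ++ [y, x]) = mtdrl (b ++ [β, γ]) (l ++ [x, y]) := by
  cases β <;> cases γ <;> simp [mtdrl, List.zip_append hb.symm]

theorem SMOut_subset_SMOut_swap_last_two (l : List ℕ) (x y : ℕ) :
    SMOut (l ++ [x, y]) ⊆ SMOut (l ++ [y, x]) := by
  rintro τ ⟨b, hb, rfl⟩
  have hb : b.length = l.length + 2 := by simpa using hb
  obtain ⟨β, γ, hβγ⟩ := List.length_eq_two.mp (show (b.drop l.length).length = 2 by simp [hb])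
  have hlen : (b.take l.length).length = l.length := by simp [hb]
  refine ⟨b.take l.length ++ [!β, β], by simp [hlen], ?_⟩
  rw [mtdrl_swap_last_two hlen β γ x y, ← hβγ, List.take_append_drop]

theorem ident_eq_append {n : ℕ} (hn : 2 ≤ n) :
    ident n = List.range' 1 (n - 2) ++ [n - 1, n] := by
  obtain ⟨k, rfl⟩ := Nat.exists_eq_add_of_le' hn
  simp [ident, List.range'_concat, Nat.add_comm 1]

theorem ncard_SMOut_of_isPermOf {n : ℕ} {π : List ℕ} (hπ : IsPermOf n π) (hn : 1 ≤ n) :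
    (SMOut π).ncard = 2 ^ (n - 1) := by
  have hlen : π.length = n := by simpa [ident] using hπ.length_eq
  rw [ncard_SMOut (hπ.nodup_iff.mpr (List.nodup_range' ..)), hlen]
  rintro rfl
  simp only [List.length_nil] at hlen
  omega

end

theorem stmt_18 (n : ℕ) (hn : 2 ≤ n) :
    IsGreatest {m : ℕ | ∃ π ρ : List ℕ, IsPermOf n π ∧ IsPermOf n ρ ∧ π ≠ ρ ∧
      m = (SMOut π ∩ SMOut ρ).ncard} (2 ^ (n - 1)) ∧
    SMOut (ident n) ⊆ SMOut (List.range' 1 (n - 2) ++ [n, n - 1]) := by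
  have hident := ident_eq_append hn
  have hsub : SMOut (ident n) ⊆ SMOut (List.range' 1 (n - 2) ++ [n, n - 1]) :=
    hident ▸ SMOut_subset_SMOut_swap_last_two _ _ _
  refine ⟨⟨⟨List.range' 1 (n - 2) ++ [n, n - 1], ident n, ?_, List.Perm.refl _, ?_, ?_⟩, ?_⟩, hsub⟩
  · rw [IsPermOf, hident]
    exact List.Perm.append_left _ (List.Perm.swap _ _ _)
  · simp [hident]
    omega
  · rw [Set.inter_eq_right.mpr hsub, ncard_SMOut_of_isPermOf (List.Perm.refl _) (by omega)]
  · rintro m ⟨π, ρ, hπ, -, -, rfl⟩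
    calc (SMOut π ∩ SMOut ρ).ncard ≤ (SMOut π).ncard :=
          Set.ncard_le_ncard Set.inter_subset_left (SMOut_finite π)
      _ = 2 ^ (n - 1) := ncard_SMOut_of_isPermOf hπ (by omega)
end
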